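/- Let N ≥ 1 and let p ∈ [2, ∞) be a real exponent. The functional B : L^p(ℝ^N) → ℝ defined by B(u) = (1/p)∫_{ℝ^N} |u(x)|^p dx is Fréchet differentiable at every u ∈ L^p(ℝ^N), and its derivative is the continuous linear functional φ ↦ ∫_{ℝ^N} |u(x)|^{p−2} u(x) φ(x) dx. -/

import Mathlib

open MeasureTheory ENNReal Real Filter Asymptotics

section Pointwise
variable {p : ℝ}

private lemma pf_hasDerivAt_g (hp : 2 ≤ p) (s : ℝ) :
    HasDerivAt (fun t : ℝ => |t| ^ (p - 2) * t) ((p - 1) * |s| ^ (p - 2)) s := by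
  rcases lt_trichotomy s 0 with hs | hs | hs
  · -- s < 0 : near s, |t| = -t, g t = (-t)^(p-2) * t = -((-t)^(p-1))
    have h1 : HasDerivAt (fun t : ℝ => -((-t) ^ (p - 1))) ((p - 1) * (-s) ^ (p - 2)) s := by
      have h2 : HasDerivAt (fun t : ℝ => (-t : ℝ)) (-1) s := (hasDerivAt_id s).neg
      have h3 : HasDerivAt (fun y : ℝ => y ^ (p - 1)) ((p - 1) * (-s) ^ (p - 1 - 1)) (-s) :=
        Real.hasDerivAt_rpow_const (Or.inl (by linarith))
      have := (h3.comp s h2).neg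
      refine this.congr_deriv ?_
      ring_nf
    rw [show (p - 1) * |s| ^ (p - 2) = (p - 1) * (-s) ^ (p - 2) by rw [abs_of_neg hs]]
    refine h1.congr_of_eventuallyEq ?_
    filter_upwards [eventually_lt_nhds hs] with t ht
    rw [abs_of_neg ht]
    rw [show p - 1 = (p - 2) + 1 by ring, Real.rpow_add_one (by linarith : (-t : ℝ) ≠ 0)]
    ring
  · -- s = 0
    subst hs
    rcases eq_or_lt_of_le hp with hp2 | hp2
    · -- p = 2 : g = id
      have : (fun t : ℝ => |t| ^ (p - 2) * t) = fun t : ℝ => t := by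
        ext t; rw [← hp2]; simp
      rw [this]
      refine (hasDerivAt_id (0 : ℝ)).congr_deriv ?_
      rw [← hp2]
      norm_num
    · -- p > 2
      have h0 : |(0 : ℝ)| ^ (p - 2) = 0 := by
        rw [abs_zero, Real.zero_rpow (by linarith)]
      rw [h0, mul_zero]
      rw [hasDerivAt_iff_tendsto_slope]
      have : Tendsto (fun t : ℝ => |t| ^ (p - 2)) (nhds 0) (nhds 0) := by
        have := (continuous_abs.tendsto (0 : ℝ)).rpow_const (p := p - 2) (Or.inr (by linarith))
        simpa [Real.zero_rpow (show p - 2 ≠ 0 by linarith)] using this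
      refine (this.mono_left nhdsWithin_le_nhds).congr' ?_
      filter_upwards [self_mem_nhdsWithin] with t ht
      have ht' : t ≠ 0 := ht
      simp only [slope_def_field, sub_zero, abs_zero, mul_zero,
        Real.zero_rpow (show p - 2 ≠ 0 by linarith), zero_mul]
      rw [mul_div_assoc, div_self ht', mul_one]
  · -- s > 0
    have h1 : HasDerivAt (fun t : ℝ => t ^ (p - 1)) ((p - 1) * s ^ (p - 2)) s := by
      have h3 : HasDerivAt (fun y : ℝ => y ^ (p - 1)) ((p - 1) * s ^ (p - 1 - 1)) s :=
        Real.hasDerivAt_rpow_const (Or.inl (by linarith))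
      convert h3 using 2; ring
    rw [show (p - 1) * |s| ^ (p - 2) = (p - 1) * s ^ (p - 2) by rw [abs_of_pos hs]]
    refine h1.congr_of_eventuallyEq ?_
    filter_upwards [eventually_gt_nhds hs] with t ht
    rw [abs_of_pos ht, show p - 1 = (p - 2) + 1 by ring,
      Real.rpow_add_one (ne_of_gt ht)]

end Pointwise

section Key
variable {p : ℝ}

private lemma pf_add_rpow_le {r x y : ℝ} (hr : 0 ≤ r) (hx : 0 ≤ x) (hy : 0 ≤ y) :
    (x + y) ^ r ≤ 2 ^ r * (x ^ r + y ^ r) := by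
  have h1 : x + y ≤ 2 * max x y := by
    rcases max_cases x y with ⟨h, h'⟩ | ⟨h, h'⟩ <;> rw [h] <;> linarith
  calc (x + y) ^ r ≤ (2 * max x y) ^ r :=
        Real.rpow_le_rpow (by linarith) h1 hr
    _ = 2 ^ r * (max x y) ^ r := Real.mul_rpow (by norm_num) (le_max_of_le_left hx)
    _ ≤ 2 ^ r * (x ^ r + y ^ r) := by
        refine mul_le_mul_of_nonneg_left ?_ (Real.rpow_nonneg (by norm_num) r)
        rcases max_cases x y with ⟨h, _⟩ | ⟨h, _⟩ <;> rw [h]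
        · nlinarith [Real.rpow_nonneg hy r]
        · nlinarith [Real.rpow_nonneg hx r]

private lemma pf_g_lip_aux (hp : 2 ≤ p) {x y : ℝ} (hxy : y < x) :
    |(|x| ^ (p - 2) * x - |y| ^ (p - 2) * y)| ≤ (p - 1) * (|x| + |y|) ^ (p - 2) * |x - y| := by
  obtain ⟨c, hc, hc'⟩ := exists_hasDerivAt_eq_slope (fun t : ℝ => |t| ^ (p - 2) * t)
    (fun s => (p - 1) * |s| ^ (p - 2)) hxy
    (fun t _ => (pf_hasDerivAt_g hp t).continuousAt.continuousWithinAt)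
    (fun t _ => pf_hasDerivAt_g hp t)
  have hne : x - y ≠ 0 := by linarith
  rw [eq_div_iff hne] at hc'
  have heq : |x| ^ (p - 2) * x - |y| ^ (p - 2) * y = (p - 1) * |c| ^ (p - 2) * (x - y) := by
    linear_combination -hc'
  have hcb : |c| ≤ |x| + |y| := by
    rw [abs_le]
    constructor
    · have := hc.1
      have := neg_abs_le y
      linarith [abs_nonneg x]
    · have := hc.2
      have := le_abs_self x
      linarith [abs_nonneg y]
  rw [heq, abs_mul, abs_mul, abs_of_nonneg (by linarith : (0:ℝ) ≤ p - 1),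
    abs_of_nonneg (Real.rpow_nonneg (abs_nonneg c) _)]
  have h2 : |c| ^ (p - 2) ≤ (|x| + |y|) ^ (p - 2) :=
    Real.rpow_le_rpow (abs_nonneg c) hcb (by linarith)
  exact mul_le_mul_of_nonneg_right (mul_le_mul_of_nonneg_left h2 (by linarith)) (abs_nonneg _)

private lemma pf_g_lip (hp : 2 ≤ p) (x y : ℝ) :
    |(|x| ^ (p - 2) * x - |y| ^ (p - 2) * y)| ≤ (p - 1) * (|x| + |y|) ^ (p - 2) * |x - y| := by
  rcases lt_trichotomy y x with h | h | h
  · exact pf_g_lip_aux hp h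
  · subst h; simp
  · have := pf_g_lip_aux hp h
    rw [add_comm (|y|), abs_sub_comm y x] at this
    rwa [abs_sub_comm] at this

private lemma pf_key (hp : 2 ≤ p) (a b : ℝ) :
    |(|a + b| ^ p - |a| ^ p - p * |a| ^ (p - 2) * a * b)| ≤
      (p * (p - 1) * 2 ^ (p - 2) * 2 ^ (p - 2)) * (|a| ^ (p - 2) * b ^ 2 + |b| ^ p) := by
  have hp1 : (1:ℝ) < p := by linarith
  have hp0 : (0:ℝ) < p := by linarith
  rcases eq_or_ne b 0 with rfl | hb
  · simp [Real.zero_rpow hp0.ne']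
  -- MVT for F t = |t|^p between a and a+b
  have hF : ∀ t : ℝ, HasDerivAt (fun t : ℝ => |t| ^ p) (p * |t| ^ (p - 2) * t) t :=
    fun t => hasDerivAt_abs_rpow t hp1
  have hmvt : ∃ c : ℝ, |c - a| ≤ |b| ∧ |c| ≤ |a| + |b| ∧
      |a + b| ^ p - |a| ^ p = p * |c| ^ (p - 2) * c * b := by
    rcases lt_or_gt_of_ne hb with hbneg | hbpos
    · have hlt : a + b < a := by linarith
      obtain ⟨c, hc, hc'⟩ := exists_hasDerivAt_eq_slope (fun t : ℝ => |t| ^ p)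
        (fun t => p * |t| ^ (p - 2) * t) hlt
        (fun t _ => (hF t).continuousAt.continuousWithinAt) (fun t _ => hF t)
      refine ⟨c, ?_, ?_, ?_⟩
      · rw [abs_of_neg hbneg, abs_of_nonpos (by linarith [hc.2] : c - a ≤ 0)]
        linarith [hc.1]
      · have h1 := hc.1; have h2 := hc.2
        rw [abs_le]; constructor
        · have := neg_abs_le a; have := neg_abs_le b; linarith
        · have := le_abs_self a; linarith [abs_nonneg b]
      · rw [eq_div_iff (by linarith : a - (a + b) ≠ 0)] at hc'
        linear_combination hc'
    · have hlt : a < a + b := by linarith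
      obtain ⟨c, hc, hc'⟩ := exists_hasDerivAt_eq_slope (fun t : ℝ => |t| ^ p)
        (fun t => p * |t| ^ (p - 2) * t) hlt
        (fun t _ => (hF t).continuousAt.continuousWithinAt) (fun t _ => hF t)
      refine ⟨c, ?_, ?_, ?_⟩
      · rw [abs_of_pos hbpos, abs_of_nonneg (by linarith [hc.1] : 0 ≤ c - a)]
        linarith [hc.2]
      · have h1 := hc.1; have h2 := hc.2
        rw [abs_le]; constructor
        · have := neg_abs_le a; linarith [abs_nonneg b]
        · have := le_abs_self a; have := le_abs_self b; linarith
      · rw [eq_div_iff (by linarith : a + b - a ≠ 0)] at hc'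
        linear_combination -hc'
  obtain ⟨c, hca, hcb, hceq⟩ := hmvt
  have hexpr : |a + b| ^ p - |a| ^ p - p * |a| ^ (p - 2) * a * b =
      p * b * (|c| ^ (p - 2) * c - |a| ^ (p - 2) * a) := by
    rw [hceq]; ring
  rw [hexpr, abs_mul, abs_mul, abs_of_pos hp0]
  have hlip := pf_g_lip hp c a
  have h2 : (|c| + |a|) ^ (p - 2) ≤ 2 ^ (p - 2) * ((|a| + |b|) ^ (p - 2)) := by
    calc (|c| + |a|) ^ (p - 2) ≤ (2 * (|a| + |b|)) ^ (p - 2) := by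
          refine Real.rpow_le_rpow (by positivity) ?_ (by linarith)
          have := abs_nonneg b
          linarith [hcb, (abs_nonneg a)]
      _ = 2 ^ (p - 2) * ((|a| + |b|) ^ (p - 2)) :=
          Real.mul_rpow (by norm_num) (by positivity)
  have h3 : (|a| + |b|) ^ (p - 2) ≤ 2 ^ (p - 2) * (|a| ^ (p - 2) + |b| ^ (p - 2)) :=
    pf_add_rpow_le (by linarith) (abs_nonneg a) (abs_nonneg b)
  -- combine
  have hgb : |(|c| ^ (p - 2) * c - |a| ^ (p - 2) * a)| ≤
      (p - 1) * (2 ^ (p - 2) * (2 ^ (p - 2) * (|a| ^ (p - 2) + |b| ^ (p - 2)))) * |b| := by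
    refine hlip.trans ?_
    have h4 : (|c| + |a|) ^ (p - 2) ≤
        2 ^ (p - 2) * (2 ^ (p - 2) * (|a| ^ (p - 2) + |b| ^ (p - 2))) := by
      refine h2.trans ?_
      exact mul_le_mul_of_nonneg_left h3 (by positivity)
    have h5 : |c - a| ≤ |b| := hca
    have hr2 : (0:ℝ) ≤ 2 ^ (p-2) * (2 ^ (p-2) * (|a| ^ (p-2) + |b| ^ (p-2))) := by positivity
    have := mul_le_mul h4 h5 (abs_nonneg _) hr2
    nlinarith [Real.rpow_nonneg (by positivity : (0:ℝ) ≤ |c| + |a|) (p - 2), abs_nonneg (c - a),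
      abs_nonneg b]
  have hfinal := mul_le_mul_of_nonneg_left hgb (by positivity : (0:ℝ) ≤ p * |b|)
  refine hfinal.trans (le_of_eq ?_)
  have hb2 : |b| * |b| = b ^ 2 := by
    rw [← abs_mul, ← sq, abs_of_nonneg (sq_nonneg b)]
  have hbp : |b| ^ (p - 2) * (|b| * |b|) = |b| ^ p := by
    rw [← sq, ← Real.rpow_natCast |b| 2, ← Real.rpow_add (abs_pos.mpr hb)]
    norm_num
  rw [← hb2, ← hbp]
  ring

end Key

section Integral
variable {α : Type*} [MeasurableSpace α] {μ : Measure α} {p : ℝ}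

private lemma pf_abs_sq (b : ℝ) : |b| ^ (2:ℝ) = b ^ 2 := by
  rw [Real.rpow_two, sq_abs]

private lemma pf_abs_g (hp : 2 ≤ p) (a : ℝ) : |(|a| ^ (p-2) * a)| = |a| ^ (p-1) := by
  rcases eq_or_ne a 0 with rfl | ha
  · simp [Real.zero_rpow (show p - 1 ≠ 0 by intro h; linarith)]
  · rw [abs_mul, abs_of_nonneg (Real.rpow_nonneg (abs_nonneg a) _),
      show p - 1 = (p - 2) + 1 by ring, Real.rpow_add_one (abs_ne_zero.mpr ha)]

private lemma pf_norm_eq (hp : 2 ≤ p) [Fact (1 ≤ ENNReal.ofReal p)]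
    (φ : Lp ℝ (ENNReal.ofReal p) μ) :
    ‖φ‖ = (∫ x, |φ x| ^ p ∂μ) ^ (1 / p) := by
  have hp0 : (0:ℝ) < p := by linarith
  have hP0 : ENNReal.ofReal p ≠ 0 := by
    simp only [ne_eq, ENNReal.ofReal_eq_zero, not_le]; linarith
  rw [Lp.norm_def, (Lp.memLp φ).eLpNorm_eq_integral_rpow_norm hP0 ENNReal.ofReal_ne_top,
    ENNReal.toReal_ofReal (Real.rpow_nonneg
      (integral_nonneg fun x => Real.rpow_nonneg (norm_nonneg _) _) _)]
  simp [ENNReal.toReal_ofReal hp0.le, Real.norm_eq_abs, one_div]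

private lemma pf_int_abs_rpow (hp : 2 ≤ p) [Fact (1 ≤ ENNReal.ofReal p)]
    (φ : Lp ℝ (ENNReal.ofReal p) μ) :
    Integrable (fun x => |φ x| ^ p) μ ∧ ∫ x, |φ x| ^ p ∂μ = ‖φ‖ ^ p := by
  have hp0 : (0:ℝ) < p := by linarith
  have hP0 : ENNReal.ofReal p ≠ 0 := by
    simp only [ne_eq, ENNReal.ofReal_eq_zero, not_le]; linarith
  constructor
  · have := (Lp.memLp φ).integrable_norm_rpow hP0 ENNReal.ofReal_ne_top
    simpa [ENNReal.toReal_ofReal hp0.le, Real.norm_eq_abs] using this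
  · rw [pf_norm_eq hp φ, ← Real.rpow_mul
      (integral_nonneg fun x => Real.rpow_nonneg (abs_nonneg _) _),
      one_div, inv_mul_cancel₀ hp0.ne', Real.rpow_one]

private lemma pf_mem_rpow (hp : 2 ≤ p) [Fact (1 ≤ ENNReal.ofReal p)]
    (u : Lp ℝ (ENNReal.ofReal p) μ) {r : ℝ} (hr : 0 < r) :
    MemLp (fun x => |u x| ^ r) (ENNReal.ofReal (p / r)) μ := by
  have := (Lp.memLp u).norm_rpow_div (ENNReal.ofReal r)
  rw [ENNReal.toReal_ofReal hr.le] at this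
  rw [← ENNReal.ofReal_div_of_pos hr] at this
  simpa only [Real.norm_eq_abs] using this


private lemma pf_memG (hp : 2 ≤ p) [Fact (1 ≤ ENNReal.ofReal p)]
    (u : Lp ℝ (ENNReal.ofReal p) μ) :
    MemLp (fun x => |u x| ^ (p-2) * u x) (ENNReal.ofReal (p / (p-1))) μ := by
  have hmeas : AEStronglyMeasurable (fun x => |u x| ^ (p-2) * u x) μ := by
    exact ((((Lp.aestronglyMeasurable u).norm.aemeasurable.pow_const
      (p-2)).aestronglyMeasurable).mul (Lp.aestronglyMeasurable u)).congr
      (Filter.EventuallyEq.of_eq (funext fun x => by simp [Real.norm_eq_abs]))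
  refine ⟨hmeas, ?_⟩
  have h1 : eLpNorm (fun x => |u x| ^ (p-2) * u x) (ENNReal.ofReal (p / (p-1))) μ
      = eLpNorm (fun x => |u x| ^ (p-1)) (ENNReal.ofReal (p / (p-1))) μ := by
    rw [← eLpNorm_norm]
    congr 1
    ext x
    rw [Real.norm_eq_abs, pf_abs_g hp]
  rw [h1]
  exact (pf_mem_rpow hp u (show (0:ℝ) < p - 1 by linarith)).2

private lemma pf_pairing (hp : 2 ≤ p) [Fact (1 ≤ ENNReal.ofReal p)]
    (u φ : Lp ℝ (ENNReal.ofReal p) μ) :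
    Integrable (fun x => |u x| ^ (p-2) * u x * φ x) μ ∧
    |∫ x, |u x| ^ (p-2) * u x * φ x ∂μ| ≤
      (∫ x, |u x| ^ p ∂μ) ^ ((p-1)/p) * ‖φ‖ := by
  have hp1 : (1:ℝ) < p := by linarith
  have hq : p.HolderConjugate (p / (p-1)) := Real.HolderConjugate.conjExponent hp1
  have hmemG := pf_memG hp u
  constructor
  · have hs := MemLp.smul (r := 1) (Lp.memLp φ) hmemG
      (hpqr := ⟨by rw [inv_one, add_comm]; exact hq.inv_add_inv_ennreal⟩)
    exact memLp_one_iff_integrable.mp hs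
  · have hA : (fun x => ‖(|u x| ^ (p-2) * u x)‖ ^ (p/(p-1))) = fun x => |u x| ^ p := by
      funext x
      rw [Real.norm_eq_abs, pf_abs_g hp, ← Real.rpow_mul (abs_nonneg _)]
      rw [mul_comm, div_mul_cancel₀ p (by linarith : p - 1 ≠ 0)]
    have hB : (∫ x, ‖φ x‖ ^ p ∂μ) ^ (1/p) = ‖φ‖ := by
      have heq : (fun x => ‖φ x‖ ^ p) = fun x => |φ x| ^ p :=
        funext fun x => by rw [Real.norm_eq_abs]
      rw [heq, pf_norm_eq hp φ]
    calc |∫ x, |u x| ^ (p-2) * u x * φ x ∂μ|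
        ≤ ∫ x, ‖(|u x| ^ (p-2) * u x)‖ * ‖φ x‖ ∂μ := by
          rw [← Real.norm_eq_abs]
          refine (norm_integral_le_integral_norm _).trans (le_of_eq ?_)
          congr 1; ext x; rw [norm_mul]
      _ ≤ (∫ x, ‖(|u x| ^ (p-2) * u x)‖ ^ (p/(p-1)) ∂μ) ^ (1/(p/(p-1))) *
          (∫ x, ‖φ x‖ ^ p ∂μ) ^ (1/p) :=
          integral_mul_norm_le_Lp_mul_Lq hq.symm hmemG (Lp.memLp φ)
      _ = (∫ x, |u x| ^ p ∂μ) ^ ((p-1)/p) * ‖φ‖ := by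
          rw [hA, hB, one_div_div]

private lemma pf_quad (hp : 2 ≤ p) [Fact (1 ≤ ENNReal.ofReal p)]
    (u : Lp ℝ (ENNReal.ofReal p) μ) :
    ∃ K : ℝ, 0 ≤ K ∧ ∀ h : Lp ℝ (ENNReal.ofReal p) μ,
      Integrable (fun x => |u x| ^ (p-2) * (h x) ^ 2) μ ∧
      ∫ x, |u x| ^ (p-2) * (h x) ^ 2 ∂μ ≤ K * ‖h‖ ^ 2 := by
  rcases eq_or_lt_of_le hp with hp2 | hp2
  · -- p = 2
    subst hp2
    refine ⟨1, zero_le_one, fun h => ?_⟩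
    have hsimp : (fun x => |u x| ^ ((2:ℝ)-2) * (h x) ^ 2) = fun x => |h x| ^ (2:ℝ) := by
      funext x
      rw [show (2:ℝ)-2 = 0 by norm_num, Real.rpow_zero, one_mul, pf_abs_sq]
    rw [hsimp]
    refine ⟨(pf_int_abs_rpow hp h).1, ?_⟩
    rw [(pf_int_abs_rpow hp h).2, one_mul, Real.rpow_two]
  · -- p > 2
    have hr : (0:ℝ) < p - 2 := by linarith
    have hrs : (p / (p-2)).HolderConjugate (p / 2) := by
      rw [Real.holderConjugate_iff]; constructor
      · rw [lt_div_iff₀ hr]; linarith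
      · rw [← one_div, ← one_div, one_div_div, one_div_div]
        field_simp
        ring
    refine ⟨(∫ x, |u x| ^ p ∂μ) ^ ((p-2)/p), Real.rpow_nonneg
      (integral_nonneg fun x => Real.rpow_nonneg (abs_nonneg _) _) _, fun h => ?_⟩
    have hmemf : MemLp (fun x => |u x| ^ (p-2)) (ENNReal.ofReal (p / (p-2))) μ :=
      pf_mem_rpow hp u hr
    have hmemg : MemLp (fun x => (h x) ^ 2) (ENNReal.ofReal (p / 2)) μ := by
      have := pf_mem_rpow hp h (show (0:ℝ) < 2 by norm_num)
      simpa only [pf_abs_sq] using this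
    constructor
    · have hs := MemLp.smul (r := 1) hmemg hmemf
        (hpqr := ⟨by rw [inv_one]; exact hrs.inv_add_inv_ennreal⟩)
      exact memLp_one_iff_integrable.mp hs
    · have hHold := integral_mul_le_Lp_mul_Lq_of_nonneg hrs
        (Filter.Eventually.of_forall fun x => Real.rpow_nonneg (abs_nonneg _) _)
        (Filter.Eventually.of_forall fun x => sq_nonneg _) hmemf hmemg
      refine hHold.trans (le_of_eq ?_)
      have hA : (fun x => (|u x| ^ (p-2)) ^ (p/(p-2))) = fun x => |u x| ^ p := by
        funext x
        rw [← Real.rpow_mul (abs_nonneg _), mul_comm,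
          div_mul_cancel₀ p (by linarith : p - 2 ≠ 0)]
      have hB : (fun x => ((h x) ^ 2) ^ (p/2)) = fun x => |h x| ^ p := by
        funext x
        rw [← pf_abs_sq, ← Real.rpow_mul (abs_nonneg _), mul_comm,
          div_mul_cancel₀ p (by norm_num : (2:ℝ) ≠ 0)]
      rw [hA, hB, (pf_int_abs_rpow hp h).2, one_div_div, one_div_div]
      congr 1
      rw [← Real.rpow_mul (norm_nonneg h), mul_comm,
        div_mul_cancel₀ (2:ℝ) (by linarith : p ≠ 0), Real.rpow_two]

end Integral

private lemma pf_littleo {X : Type*} [NormedAddCommGroup X] {r : ℝ} (hr : 1 < r) :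
    (fun h : X => ‖h‖ ^ r) =o[nhds 0] (fun h => h) := by
  rw [← Asymptotics.isLittleO_norm_right]
  have heq : (fun h : X => ‖h‖ ^ r) = fun h : X => ‖h‖ ^ (r - 1) * ‖h‖ := by
    funext h
    have := Real.rpow_add' (norm_nonneg h) (show (r-1) + 1 ≠ 0 by
      intro hc; rw [sub_add_cancel] at hc; exact (by linarith : r ≠ 0) hc)
    rw [show (r-1) + 1 = r by ring] at this
    rw [this, Real.rpow_one]
  rw [heq]
  have h1 : (fun h : X => ‖h‖ ^ (r-1)) =o[nhds 0] (fun _ : X => (1:ℝ)) := by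
    rw [Asymptotics.isLittleO_const_iff one_ne_zero]
    have ht : Filter.Tendsto (fun h : X => ‖h‖ ^ (r-1)) (nhds 0)
        (nhds ((0:ℝ) ^ (r-1))) := by
      refine (Filter.Tendsto.rpow_const ?_ (Or.inr (by linarith)))
      simpa using continuous_norm.tendsto (0 : X)
    rwa [Real.zero_rpow (show r - 1 ≠ 0 by intro hc; linarith [sub_eq_zero.mp hc])] at ht
  have h2 := h1.mul_isBigO (Asymptotics.isBigO_refl (fun h : X => ‖h‖) (nhds 0))
  simpa using h2

theorem power_functional_frechet
    (N : ℕ) (hN : 1 ≤ N) (p : ℝ) (hp : 2 ≤ p)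
    [Fact (1 ≤ ENNReal.ofReal p)]
    (u : Lp ℝ (ENNReal.ofReal p) (volume : Measure (Fin N → ℝ))) :
    ∃ L : Lp ℝ (ENNReal.ofReal p) (volume : Measure (Fin N → ℝ)) →L[ℝ] ℝ,
      (∀ φ : Lp ℝ (ENNReal.ofReal p) (volume : Measure (Fin N → ℝ)),
        L φ = ∫ x, |u x| ^ (p - 2) * u x * φ x) ∧
      HasFDerivAt
        (fun w : Lp ℝ (ENNReal.ofReal p) (volume : Measure (Fin N → ℝ)) =>
          (1 / p) * ∫ x, |w x| ^ p) L u := by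
  have hp1 : (1:ℝ) < p := by linarith
  have hp0 : (0:ℝ) < p := by linarith
  have hint : ∀ φ : Lp ℝ (ENNReal.ofReal p) (volume : Measure (Fin N → ℝ)),
      Integrable (fun x => |u x| ^ (p - 2) * u x * φ x) volume :=
    fun φ => (pf_pairing hp u φ).1
  -- the linear map
  let L₀ : Lp ℝ (ENNReal.ofReal p) (volume : Measure (Fin N → ℝ)) →ₗ[ℝ] ℝ :=
    { toFun := fun φ => ∫ x, |u x| ^ (p - 2) * u x * φ x
      map_add' := by
        intro φ ψ
        have hadd := Lp.coeFn_add φ ψ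
        have h1 : (∫ x, |u x| ^ (p - 2) * u x * (φ + ψ) x) =
            ∫ x, (|u x| ^ (p - 2) * u x * φ x + |u x| ^ (p - 2) * u x * ψ x) := by
          refine integral_congr_ae (hadd.mono fun x hx => ?_)
          dsimp only
          rw [hx]
          simp [mul_add]
        rw [h1, integral_add (hint φ) (hint ψ)]
      map_smul' := by
        intro c φ
        have hsmul := Lp.coeFn_smul c φ
        have h1 : (∫ x, |u x| ^ (p - 2) * u x * (c • φ) x) =
            ∫ x, c * (|u x| ^ (p - 2) * u x * φ x) := by
          refine integral_congr_ae (hsmul.mono fun x hx => ?_)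
          dsimp only
          rw [hx]
          simp only [Pi.smul_apply, smul_eq_mul]
          ring
        rw [h1, integral_const_mul, RingHom.id_apply, smul_eq_mul] }
  have hbound0 : ∀ φ : Lp ℝ (ENNReal.ofReal p) (volume : Measure (Fin N → ℝ)),
      ‖L₀ φ‖ ≤ (∫ x, |u x| ^ p) ^ ((p-1)/p) * ‖φ‖ := by
    intro φ
    rw [Real.norm_eq_abs]
    exact (pf_pairing hp u φ).2
  refine ⟨L₀.mkContinuous _ hbound0, fun φ => rfl, ?_⟩
  rw [hasFDerivAt_iff_isLittleO_nhds_zero]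
  obtain ⟨K₁, hK₁, hquad⟩ := pf_quad hp u
  obtain ⟨C, hC, hkey⟩ : ∃ C : ℝ, 0 ≤ C ∧ ∀ a b : ℝ,
      |(|a + b| ^ p - |a| ^ p - p * |a| ^ (p - 2) * a * b)| ≤
        C * (|a| ^ (p - 2) * b ^ 2 + |b| ^ p) := by
    refine ⟨p * (p - 1) * 2 ^ (p - 2) * 2 ^ (p - 2), ?_, pf_key hp⟩
    have h2 := Real.rpow_nonneg (show (0:ℝ) ≤ 2 by norm_num) (p - 2)
    have h3 : 0 ≤ p * (p - 1) := by nlinarith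
    positivity
  set c1 : ℝ := (1/p) * C * K₁ with hc1def
  set c2 : ℝ := (1/p) * C with hc2def
  have hc1 : 0 ≤ c1 := by rw [hc1def]; positivity
  have hc2 : 0 ≤ c2 := by rw [hc2def]; positivity
  have hbound : ∀ h : Lp ℝ (ENNReal.ofReal p) (volume : Measure (Fin N → ℝ)),
      ‖(1/p) * (∫ x, |(u + h) x| ^ p) - (1/p) * (∫ x, |u x| ^ p) -
          (L₀.mkContinuous _ hbound0) h‖ ≤
        c1 * ‖h‖ ^ (2:ℝ) + c2 * ‖h‖ ^ p := by
    intro h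
    have hw : ⇑(u + h) =ᵐ[(volume : Measure (Fin N → ℝ))] ⇑u + ⇑h := Lp.coeFn_add u h
    have intU : Integrable (fun x => |u x| ^ p) volume := (pf_int_abs_rpow hp u).1
    have intW' : Integrable (fun x => |u x + h x| ^ p) volume := by
      refine (pf_int_abs_rpow hp (u + h)).1.congr (hw.mono fun x hx => ?_)
      dsimp only
      rw [hx]; rfl
    have hWeq : (∫ x, |(u + h) x| ^ p) = ∫ x, |u x + h x| ^ p := by
      refine integral_congr_ae (hw.mono fun x hx => ?_)
      dsimp only
      rw [hx]; rfl
    have intG : Integrable (fun x => |u x| ^ (p - 2) * u x * h x) volume := hint h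
    have intQ : Integrable (fun x => |u x| ^ (p-2) * (h x) ^ 2) volume := (hquad h).1
    have intHp : Integrable (fun x => |h x| ^ p) volume := (pf_int_abs_rpow hp h).1
    have intWU : Integrable (fun x => |u x + h x| ^ p - |u x| ^ p) volume := intW'.sub intU
    have intGp : Integrable (fun x => p * (|u x| ^ (p - 2) * u x * h x)) volume :=
      intG.const_mul p
    have intF : Integrable
        (fun x => |u x + h x| ^ p - |u x| ^ p - p * (|u x| ^ (p - 2) * u x * h x))
        volume := intWU.sub intGp
    have hE : (1/p) * (∫ x, |(u + h) x| ^ p) - (1/p) * (∫ x, |u x| ^ p) -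
          (L₀.mkContinuous _ hbound0) h =
        (1/p) * ∫ x, (|u x + h x| ^ p - |u x| ^ p
          - p * (|u x| ^ (p - 2) * u x * h x)) := by
      rw [hWeq, integral_sub intWU intGp, integral_sub intW' intU, integral_const_mul]
      have hLh : (L₀.mkContinuous _ hbound0) h = ∫ x, |u x| ^ (p - 2) * u x * h x := rfl
      rw [hLh]
      field_simp
    rw [hE]
    have hptw : ∀ᵐ x ∂(volume : Measure (Fin N → ℝ)),
        ‖(|u x + h x| ^ p - |u x| ^ p - p * (|u x| ^ (p - 2) * u x * h x))‖ ≤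
          C * (|u x| ^ (p-2) * (h x) ^ 2 + |h x| ^ p) := by
      refine Filter.Eventually.of_forall fun x => ?_
      have hk := hkey (u x) (h x)
      rw [Real.norm_eq_abs]
      calc |(|u x + h x| ^ p - |u x| ^ p - p * (|u x| ^ (p - 2) * u x * h x))|
          = |(|u x + h x| ^ p - |u x| ^ p - p * |u x| ^ (p - 2) * (u x) * h x)| := by
            ring_nf
        _ ≤ C * (|u x| ^ (p-2) * (h x) ^ 2 + |h x| ^ p) := hk
    have step1 : ‖(1/p) * ∫ x, (|u x + h x| ^ p - |u x| ^ p
          - p * (|u x| ^ (p - 2) * u x * h x))‖ ≤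
        (1/p) * ∫ x, C * (|u x| ^ (p-2) * (h x) ^ 2 + |h x| ^ p) := by
      rw [norm_mul, Real.norm_eq_abs (1/p), abs_of_nonneg (by positivity : (0:ℝ) ≤ 1/p)]
      refine mul_le_mul_of_nonneg_left ?_ (by positivity)
      refine (norm_integral_le_integral_norm _).trans ?_
      exact integral_mono_ae intF.norm ((intQ.add intHp).const_mul C) hptw
    refine step1.trans ?_
    rw [integral_const_mul, integral_add intQ intHp, (pf_int_abs_rpow hp h).2]
    have h1 : (∫ x, |u x| ^ (p-2) * (h x) ^ 2) + ‖h‖ ^ p ≤ K₁ * ‖h‖ ^ 2 + ‖h‖ ^ p :=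
      add_le_add_left (hquad h).2 _
    calc (1/p) * (C * ((∫ x, |u x| ^ (p-2) * (h x) ^ 2) + ‖h‖ ^ p))
        ≤ (1/p) * (C * (K₁ * ‖h‖ ^ 2 + ‖h‖ ^ p)) :=
          mul_le_mul_of_nonneg_left (mul_le_mul_of_nonneg_left h1 hC) (by positivity)
      _ = c1 * ‖h‖ ^ (2:ℝ) + c2 * ‖h‖ ^ p := by
          rw [Real.rpow_two, hc1def, hc2def]
          ring
  have hD : (fun h : Lp ℝ (ENNReal.ofReal p) (volume : Measure (Fin N → ℝ)) =>
        c1 * ‖h‖ ^ (2:ℝ) + c2 * ‖h‖ ^ p) =o[nhds 0]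
      (fun h : Lp ℝ (ENNReal.ofReal p) (volume : Measure (Fin N → ℝ)) => h) :=
    ((pf_littleo (by norm_num : (1:ℝ) < 2)).const_mul_left c1).add
      ((pf_littleo hp1).const_mul_left c2)
  refine Asymptotics.IsBigO.trans_isLittleO (Asymptotics.isBigO_of_le _ fun h => ?_) hD
  rw [Real.norm_eq_abs (c1 * ‖h‖ ^ (2:ℝ) + c2 * ‖h‖ ^ p),
    abs_of_nonneg (by positivity : (0:ℝ) ≤ c1 * ‖h‖ ^ (2:ℝ) + c2 * ‖h‖ ^ p)]
  exact hbound h
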